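/- arXiv:1210.7300 — 3 statements merged into one kernel-verified Lean document; each statement's English description precedes it below -/
import Mathlib

section
/- Let 𝔻 ⊆ ℂ be a nonempty connected open set, and let w, B : 𝔻 → ℂ and H, u : 𝔻 → ℝ be smooth functions. For λ ∈ ℂ \ {0} define matrix-valued functions on 𝔻: U^λ = [[w_z/4 + (1/2)H_z e^{(u−w)/2}, −λ⁻¹ e^{w/2}], [λ⁻¹ B e^{−w/2}, −w_z/4]] and V^λ = [[−w_{z̄}/4, −λ (conj B) e^{−w/2}], [λ e^{w/2}, w_{z̄}/4 + (1/2)H_{z̄} e^{(u−w)/2}]], where subscripts z and z̄ denote Wirtinger derivatives. Then the zero-curvature equation ∂_{z̄}U^λ − ∂_z V^λ + V^λ U^λ − U^λ V^λ = 0 holds on 𝔻 for every λ ∈ ℂ \ {0} if and only if H is constant on 𝔻, B is holomorphic on 𝔻 (∂_{z̄}B = 0), and the Gauss equation (1/2) w_{zz̄} + e^{w} − B · (conj B) · e^{−w} = 0 holds on 𝔻. -/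
/-- Wirtinger derivative `f_z = (1/2)(∂ₓf - i ∂_yf)`. -/
noncomputable def wirtZ (f : ℂ → ℂ) (z : ℂ) : ℂ :=
  (1 / 2) * (fderiv ℝ f z 1 - Complex.I * fderiv ℝ f z Complex.I)

/-- Wirtinger derivative `f_z̄ = (1/2)(∂ₓf + i ∂_yf)`. -/
noncomputable def wirtZbar (f : ℂ → ℂ) (z : ℂ) : ℂ :=
  (1 / 2) * (fderiv ℝ f z 1 + Complex.I * fderiv ℝ f z Complex.I)

/-- Entrywise Wirtinger derivative `A_z` of a matrix-valued function. -/
noncomputable def mwirtZ (A : ℂ → Matrix (Fin 2) (Fin 2) ℂ) (z : ℂ) :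
    Matrix (Fin 2) (Fin 2) ℂ :=
  Matrix.of fun i j => wirtZ (fun ζ => A ζ i j) z

/-- Entrywise Wirtinger derivative `A_z̄` of a matrix-valued function. -/
noncomputable def mwirtZbar (A : ℂ → Matrix (Fin 2) (Fin 2) ℂ) (z : ℂ) :
    Matrix (Fin 2) (Fin 2) ℂ :=
  Matrix.of fun i j => wirtZbar (fun ζ => A ζ i j) z

/-- The coefficient matrix `U^λ`. -/
noncomputable def Umat (w B : ℂ → ℂ) (H u : ℂ → ℝ) (lam z : ℂ) :
    Matrix (Fin 2) (Fin 2) ℂ :=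
  !![wirtZ w z / 4 + (1 / 2) * wirtZ (fun ζ => (H ζ : ℂ)) z *
        Complex.exp (((u z : ℂ) - w z) / 2),
     -lam⁻¹ * Complex.exp (w z / 2);
     lam⁻¹ * B z * Complex.exp (-(w z) / 2),
     -(wirtZ w z) / 4]

/-- The coefficient matrix `V^λ`. -/
noncomputable def Vmat (w B : ℂ → ℂ) (H u : ℂ → ℝ) (lam z : ℂ) :
    Matrix (Fin 2) (Fin 2) ℂ :=
  !![-(wirtZbar w z) / 4,
     -lam * starRingEnd ℂ (B z) * Complex.exp (-(w z) / 2);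
     lam * Complex.exp (w z / 2),
     wirtZbar w z / 4 + (1 / 2) * wirtZbar (fun ζ => (H ζ : ℂ)) z *
        Complex.exp (((u z : ℂ) - w z) / 2)]

section WirtCalc
variable {f g : ℂ → ℂ} {z c : ℂ}

lemma wirtZ_congr (h : f =ᶠ[nhds z] g) : wirtZ f z = wirtZ g z := by
  unfold wirtZ; rw [h.fderiv_eq]

lemma wirtZbar_congr (h : f =ᶠ[nhds z] g) : wirtZbar f z = wirtZbar g z := by
  unfold wirtZbar; rw [h.fderiv_eq]

lemma wirtZ_const (c : ℂ) : wirtZ (fun _ => c) z = 0 := by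
  unfold wirtZ; simp [fderiv_const]

lemma wirtZbar_const (c : ℂ) : wirtZbar (fun _ => c) z = 0 := by
  unfold wirtZbar; simp [fderiv_const]

lemma wirtZ_add (hf : DifferentiableAt ℝ f z) (hg : DifferentiableAt ℝ g z) :
    wirtZ (fun ζ => f ζ + g ζ) z = wirtZ f z + wirtZ g z := by
  unfold wirtZ; rw [fderiv_fun_add hf hg]; simp; ring

lemma wirtZbar_add (hf : DifferentiableAt ℝ f z) (hg : DifferentiableAt ℝ g z) :
    wirtZbar (fun ζ => f ζ + g ζ) z = wirtZbar f z + wirtZbar g z := by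
  unfold wirtZbar; rw [fderiv_fun_add hf hg]; simp; ring

lemma wirtZ_sub (hf : DifferentiableAt ℝ f z) (hg : DifferentiableAt ℝ g z) :
    wirtZ (fun ζ => f ζ - g ζ) z = wirtZ f z - wirtZ g z := by
  unfold wirtZ; rw [fderiv_fun_sub hf hg]; simp; ring

lemma wirtZbar_sub (hf : DifferentiableAt ℝ f z) (hg : DifferentiableAt ℝ g z) :
    wirtZbar (fun ζ => f ζ - g ζ) z = wirtZbar f z - wirtZbar g z := by
  unfold wirtZbar; rw [fderiv_fun_sub hf hg]; simp; ring

lemma wirtZ_mul (hf : DifferentiableAt ℝ f z) (hg : DifferentiableAt ℝ g z) :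
    wirtZ (fun ζ => f ζ * g ζ) z = wirtZ f z * g z + f z * wirtZ g z := by
  unfold wirtZ; rw [fderiv_fun_mul hf hg]; simp; ring

lemma wirtZbar_mul (hf : DifferentiableAt ℝ f z) (hg : DifferentiableAt ℝ g z) :
    wirtZbar (fun ζ => f ζ * g ζ) z = wirtZbar f z * g z + f z * wirtZbar g z := by
  unfold wirtZbar; rw [fderiv_fun_mul hf hg]; simp; ring

lemma wirtZ_const_mul (hf : DifferentiableAt ℝ f z) (c : ℂ) :
    wirtZ (fun ζ => c * f ζ) z = c * wirtZ f z := by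
  rw [show (fun ζ => c * f ζ) = (fun ζ => (fun _ : ℂ => c) ζ * f ζ) from rfl,
    wirtZ_mul (differentiableAt_const c) hf, wirtZ_const]; ring

lemma wirtZbar_const_mul (hf : DifferentiableAt ℝ f z) (c : ℂ) :
    wirtZbar (fun ζ => c * f ζ) z = c * wirtZbar f z := by
  rw [show (fun ζ => c * f ζ) = (fun ζ => (fun _ : ℂ => c) ζ * f ζ) from rfl,
    wirtZbar_mul (differentiableAt_const c) hf, wirtZbar_const]; ring

lemma wirtZ_div_const (hf : DifferentiableAt ℝ f z) (c : ℂ) :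
    wirtZ (fun ζ => f ζ / c) z = wirtZ f z / c := by
  simp only [div_eq_mul_inv]
  rw [show (fun ζ => f ζ * c⁻¹) = (fun ζ => f ζ * (fun _ : ℂ => c⁻¹) ζ) from rfl,
    wirtZ_mul hf (differentiableAt_const _), wirtZ_const]; ring

lemma wirtZbar_div_const (hf : DifferentiableAt ℝ f z) (c : ℂ) :
    wirtZbar (fun ζ => f ζ / c) z = wirtZbar f z / c := by
  simp only [div_eq_mul_inv]
  rw [show (fun ζ => f ζ * c⁻¹) = (fun ζ => f ζ * (fun _ : ℂ => c⁻¹) ζ) from rfl,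
    wirtZbar_mul hf (differentiableAt_const _), wirtZbar_const]; ring

lemma wirtZ_neg (hf : DifferentiableAt ℝ f z) :
    wirtZ (fun ζ => -(f ζ)) z = -(wirtZ f z) := by
  rw [show (fun ζ => -(f ζ)) = (fun ζ => (-1 : ℂ) * f ζ) by funext ζ; ring,
    wirtZ_const_mul hf]; ring

lemma wirtZbar_neg (hf : DifferentiableAt ℝ f z) :
    wirtZbar (fun ζ => -(f ζ)) z = -(wirtZbar f z) := by
  rw [show (fun ζ => -(f ζ)) = (fun ζ => (-1 : ℂ) * f ζ) by funext ζ; ring,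
    wirtZbar_const_mul hf]; ring


lemma diffAt_div_const {f : ℂ → ℂ} {z c : ℂ} (hf : DifferentiableAt ℝ f z) :
    DifferentiableAt ℝ (fun ζ => f ζ / c) z := by
  simp only [div_eq_mul_inv]
  exact hf.mul_const _

lemma diffAt_cexp (hf : DifferentiableAt ℝ f z) :
    DifferentiableAt ℝ (fun ζ => Complex.exp (f ζ)) z := by
  have h1 : HasFDerivAt Complex.exp
      ((ContinuousLinearMap.smulRight (1 : ℂ →L[ℂ] ℂ) (Complex.exp (f z))).restrictScalars ℝ)
      (f z) :=
    ((Complex.hasDerivAt_exp (f z)).hasFDerivAt).restrictScalars ℝ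
  exact (h1.comp z hf.hasFDerivAt).differentiableAt

lemma fderiv_cexp_real (hf : DifferentiableAt ℝ f z) (v : ℂ) :
    fderiv ℝ (fun ζ => Complex.exp (f ζ)) z v = Complex.exp (f z) * fderiv ℝ f z v := by
  have h1 : HasFDerivAt Complex.exp
      ((ContinuousLinearMap.smulRight (1 : ℂ →L[ℂ] ℂ) (Complex.exp (f z))).restrictScalars ℝ)
      (f z) :=
    ((Complex.hasDerivAt_exp (f z)).hasFDerivAt).restrictScalars ℝ
  have h2 := (h1.comp z hf.hasFDerivAt).fderiv
  have h3 : (fun ζ => Complex.exp (f ζ)) = Complex.exp ∘ f := rfl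
  rw [h3, h2]; simp [mul_comm]

lemma wirtZ_exp (hf : DifferentiableAt ℝ f z) :
    wirtZ (fun ζ => Complex.exp (f ζ)) z = Complex.exp (f z) * wirtZ f z := by
  unfold wirtZ; rw [fderiv_cexp_real hf, fderiv_cexp_real hf]; ring

lemma wirtZbar_exp (hf : DifferentiableAt ℝ f z) :
    wirtZbar (fun ζ => Complex.exp (f ζ)) z = Complex.exp (f z) * wirtZbar f z := by
  unfold wirtZbar; rw [fderiv_cexp_real hf, fderiv_cexp_real hf]; ring

lemma fderiv_conj_real (f : ℂ → ℂ) (z v : ℂ) :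
    fderiv ℝ (fun ζ => (starRingEnd ℂ) (f ζ)) z v = (starRingEnd ℂ) (fderiv ℝ f z v) := by
  by_cases hf : DifferentiableAt ℝ f z
  · have h2 : fderiv ℝ (fun ζ => (starRingEnd ℂ) (f ζ)) z
        = (Complex.conjCLE.toContinuousLinearMap.comp (fderiv ℝ f z)) :=
      (Complex.conjCLE.hasFDerivAt.comp z hf.hasFDerivAt).fderiv
    rw [h2]; rfl
  · have hf2 : ¬ DifferentiableAt ℝ (fun ζ => (starRingEnd ℂ) (f ζ)) z := by
      intro h
      have h3 := (Complex.conjCLE.differentiable.differentiableAt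
        (x := (starRingEnd ℂ) (f z))).comp z h
      have h4 : (⇑Complex.conjCLE ∘ fun ζ => (starRingEnd ℂ) (f ζ)) = f := by
        funext ζ; simp [Complex.conjCLE_apply]
      rw [h4] at h3
      exact hf h3
    rw [fderiv_zero_of_not_differentiableAt hf, fderiv_zero_of_not_differentiableAt hf2]
    simp

lemma diffAt_conj (hf : DifferentiableAt ℝ f z) :
    DifferentiableAt ℝ (fun ζ => (starRingEnd ℂ) (f ζ)) z :=
  (Complex.conjCLE.differentiable.differentiableAt).comp z hf

lemma wirtZ_conj (f : ℂ → ℂ) (z : ℂ) :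
    wirtZ (fun ζ => (starRingEnd ℂ) (f ζ)) z = (starRingEnd ℂ) (wirtZbar f z) := by
  unfold wirtZ wirtZbar
  rw [fderiv_conj_real, fderiv_conj_real]
  rw [map_mul, map_add, map_mul]
  simp [Complex.conj_I, map_ofNat]
  ring

lemma wirtZbar_conj (f : ℂ → ℂ) (z : ℂ) :
    wirtZbar (fun ζ => (starRingEnd ℂ) (f ζ)) z = (starRingEnd ℂ) (wirtZ f z) := by
  unfold wirtZ wirtZbar
  rw [fderiv_conj_real, fderiv_conj_real]
  rw [map_mul, map_sub, map_mul]
  simp [Complex.conj_I, map_ofNat]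

lemma diffAt_fderiv_apply (hd : DifferentiableAt ℝ (fderiv ℝ f) z) (v : ℂ) :
    DifferentiableAt ℝ (fun ζ => fderiv ℝ f ζ v) z :=
  ((ContinuousLinearMap.apply ℝ ℂ v).differentiable.differentiableAt).comp z hd

lemma fderiv_fderiv_apply (hd : DifferentiableAt ℝ (fderiv ℝ f) z) (a v : ℂ) :
    fderiv ℝ (fun ζ => fderiv ℝ f ζ v) z a = fderiv ℝ (fderiv ℝ f) z a v := by
  have h1 : (fun ζ => fderiv ℝ f ζ v) = (ContinuousLinearMap.apply ℝ ℂ v) ∘ (fderiv ℝ f) := rfl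
  rw [h1, fderiv_comp z ((ContinuousLinearMap.apply ℝ ℂ v).differentiable.differentiableAt) hd]
  simp

lemma diffAt_wirtZ (hd : DifferentiableAt ℝ (fderiv ℝ f) z) :
    DifferentiableAt ℝ (wirtZ f) z := by
  unfold wirtZ
  exact (((diffAt_fderiv_apply hd 1).sub
    ((diffAt_fderiv_apply hd Complex.I).const_mul _)).const_mul _)

lemma diffAt_wirtZbar (hd : DifferentiableAt ℝ (fderiv ℝ f) z) :
    DifferentiableAt ℝ (wirtZbar f) z := by
  unfold wirtZbar
  exact (((diffAt_fderiv_apply hd 1).add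
    ((diffAt_fderiv_apply hd Complex.I).const_mul _)).const_mul _)

lemma fderiv_wirtZ_apply (hd : DifferentiableAt ℝ (fderiv ℝ f) z) (a : ℂ) :
    fderiv ℝ (wirtZ f) z a
      = (1 / 2) * (fderiv ℝ (fderiv ℝ f) z a 1
          - Complex.I * fderiv ℝ (fderiv ℝ f) z a Complex.I) := by
  unfold wirtZ
  rw [fderiv_const_mul (a := fun ζ => fderiv ℝ f ζ 1 - Complex.I * fderiv ℝ f ζ Complex.I)
    (((diffAt_fderiv_apply hd 1).sub
    ((diffAt_fderiv_apply hd Complex.I).const_mul _)))]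
  rw [ContinuousLinearMap.smul_apply]
  rw [fderiv_fun_sub (diffAt_fderiv_apply hd 1) ((diffAt_fderiv_apply hd Complex.I).const_mul _)]
  rw [ContinuousLinearMap.sub_apply]
  rw [fderiv_const_mul (diffAt_fderiv_apply hd Complex.I)]
  rw [ContinuousLinearMap.smul_apply]
  rw [fderiv_fderiv_apply hd, fderiv_fderiv_apply hd]
  simp [smul_eq_mul]

lemma fderiv_wirtZbar_apply (hd : DifferentiableAt ℝ (fderiv ℝ f) z) (a : ℂ) :
    fderiv ℝ (wirtZbar f) z a
      = (1 / 2) * (fderiv ℝ (fderiv ℝ f) z a 1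
          + Complex.I * fderiv ℝ (fderiv ℝ f) z a Complex.I) := by
  unfold wirtZbar
  rw [fderiv_const_mul (a := fun ζ => fderiv ℝ f ζ 1 + Complex.I * fderiv ℝ f ζ Complex.I)
    (((diffAt_fderiv_apply hd 1).add
    ((diffAt_fderiv_apply hd Complex.I).const_mul _)))]
  rw [ContinuousLinearMap.smul_apply]
  rw [fderiv_fun_add (diffAt_fderiv_apply hd 1) ((diffAt_fderiv_apply hd Complex.I).const_mul _)]
  rw [ContinuousLinearMap.add_apply]
  rw [fderiv_const_mul (diffAt_fderiv_apply hd Complex.I)]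
  rw [ContinuousLinearMap.smul_apply]
  rw [fderiv_fderiv_apply hd, fderiv_fderiv_apply hd]
  simp [smul_eq_mul]

lemma wirtZ_wirtZbar_comm (hf : ContDiffAt ℝ 2 f z) :
    wirtZ (wirtZbar f) z = wirtZbar (wirtZ f) z := by
  have hd : DifferentiableAt ℝ (fderiv ℝ f) z := by
    have h1 : ContDiffAt ℝ 1 (fderiv ℝ f) z := hf.fderiv_right (le_refl _)
    exact h1.differentiableAt one_ne_zero
  have hsymm : fderiv ℝ (fderiv ℝ f) z 1 Complex.I = fderiv ℝ (fderiv ℝ f) z Complex.I 1 :=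
    (hf.isSymmSndFDerivAt (by norm_num)) 1 Complex.I
  conv_lhs => rw [wirtZ]
  conv_rhs => rw [wirtZbar]
  rw [fderiv_wirtZbar_apply hd, fderiv_wirtZbar_apply hd,
      fderiv_wirtZ_apply hd, fderiv_wirtZ_apply hd, hsymm]
  ring

lemma fderiv_eq_zero_of_wirt (h1 : wirtZ f z = 0) (h2 : wirtZbar f z = 0) :
    fderiv ℝ f z = 0 := by
  unfold wirtZ at h1
  unfold wirtZbar at h2
  have hD1 : fderiv ℝ f z 1 = 0 := by linear_combination h1 + h2
  have hDI : fderiv ℝ f z Complex.I = 0 := by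
    linear_combination Complex.I * h1 - Complex.I * h2
      + (fderiv ℝ f z Complex.I) * Complex.I_sq
  ext v
  have hv : v = (v.re : ℝ) • (1 : ℂ) + (v.im : ℝ) • Complex.I := by
    simp only [Complex.real_smul, mul_one]
    exact (Complex.re_add_im v).symm
  rw [ContinuousLinearMap.zero_apply]
  conv_lhs => rw [hv]
  rw [map_add, map_smul, map_smul, hD1, hDI]
  simp

end WirtCalc

section Key

lemma hM_key (𝔻 : Set ℂ) (hopen : IsOpen 𝔻) (w B : ℂ → ℂ) (H u : ℂ → ℝ)
    (hw : ContDiffOn ℝ (⊤ : ℕ∞) w 𝔻) (hB : ContDiffOn ℝ (⊤ : ℕ∞) B 𝔻)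
    (hH : ContDiffOn ℝ (⊤ : ℕ∞) H 𝔻) (hu : ContDiffOn ℝ (⊤ : ℕ∞) u 𝔻)
    {lam z : ℂ} (hlam : lam ≠ 0) (hz : z ∈ 𝔻) :
    mwirtZbar (Umat w B H u lam) z - mwirtZ (Vmat w B H u lam) z
      + Vmat w B H u lam z * Umat w B H u lam z - Umat w B H u lam z * Vmat w B H u lam z
    = !![(1/2) * wirtZbar (wirtZ w) z + Complex.exp (w z)
            - B z * starRingEnd ℂ (B z) * Complex.exp (-(w z))
            + (1/2) * wirtZbar (wirtZ (fun ζ => (H ζ : ℂ))) z * Complex.exp (((u z : ℂ) - w z)/2)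
            + (1/2) * wirtZ (fun ζ => (H ζ : ℂ)) z * Complex.exp (((u z : ℂ) - w z)/2)
                * (wirtZbar (fun ζ => (u ζ : ℂ)) z - wirtZbar w z) / 2,
         lam⁻¹ * (Complex.exp (w z/2) * ((1/2) * wirtZbar (fun ζ => (H ζ : ℂ)) z
              * Complex.exp (((u z : ℂ) - w z)/2)))
            + lam * (Complex.exp (-(w z)/2) * (starRingEnd ℂ (wirtZbar B z)
              + starRingEnd ℂ (B z) * ((1/2) * wirtZ (fun ζ => (H ζ : ℂ)) z
                * Complex.exp (((u z : ℂ) - w z)/2))));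
         lam⁻¹ * (Complex.exp (-(w z)/2) * (wirtZbar B z
              + B z * ((1/2) * wirtZbar (fun ζ => (H ζ : ℂ)) z * Complex.exp (((u z : ℂ) - w z)/2))))
            + lam * (Complex.exp (w z/2) * ((1/2) * wirtZ (fun ζ => (H ζ : ℂ)) z
              * Complex.exp (((u z : ℂ) - w z)/2))),
         -((1/2) * wirtZbar (wirtZ w) z + Complex.exp (w z)
            - B z * starRingEnd ℂ (B z) * Complex.exp (-(w z)))
            - ((1/2) * wirtZ (wirtZbar (fun ζ => (H ζ : ℂ))) z * Complex.exp (((u z : ℂ) - w z)/2)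
            + (1/2) * wirtZbar (fun ζ => (H ζ : ℂ)) z * Complex.exp (((u z : ℂ) - w z)/2)
                * (wirtZ (fun ζ => (u ζ : ℂ)) z - wirtZ w z) / 2)] := by
  have hn : 𝔻 ∈ nhds z := hopen.mem_nhds hz
  have cwT : ContDiffAt ℝ (⊤ : ℕ∞) w z := hw.contDiffAt hn
  have cBT : ContDiffAt ℝ (⊤ : ℕ∞) B z := hB.contDiffAt hn
  have cHcT : ContDiffAt ℝ (⊤ : ℕ∞) (fun ζ => (H ζ : ℂ)) z :=
    (Complex.ofRealCLM.contDiff.comp_contDiffOn hH).contDiffAt hn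
  have cucT : ContDiffAt ℝ (⊤ : ℕ∞) (fun ζ => (u ζ : ℂ)) z :=
    (Complex.ofRealCLM.contDiff.comp_contDiffOn hu).contDiffAt hn
  have dw : DifferentiableAt ℝ w z := cwT.differentiableAt (by simp)
  have dB : DifferentiableAt ℝ B z := cBT.differentiableAt (by simp)
  have dHc : DifferentiableAt ℝ (fun ζ => (H ζ : ℂ)) z := cHcT.differentiableAt (by simp)
  have duc : DifferentiableAt ℝ (fun ζ => (u ζ : ℂ)) z := cucT.differentiableAt (by simp)
  have dfw : DifferentiableAt ℝ (fderiv ℝ w) z :=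
    (cwT.fderiv_right (m := 1) (WithTop.coe_le_coe.2 le_top)).differentiableAt one_ne_zero
  have dfHc : DifferentiableAt ℝ (fderiv ℝ (fun ζ => (H ζ : ℂ))) z :=
    (cHcT.fderiv_right (m := 1) (WithTop.coe_le_coe.2 le_top)).differentiableAt one_ne_zero
  have dwz : DifferentiableAt ℝ (wirtZ w) z := diffAt_wirtZ dfw
  have dwzb : DifferentiableAt ℝ (wirtZbar w) z := diffAt_wirtZbar dfw
  have dhz : DifferentiableAt ℝ (wirtZ (fun ζ => (H ζ : ℂ))) z := diffAt_wirtZ dfHc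
  have dhzb : DifferentiableAt ℝ (wirtZbar (fun ζ => (H ζ : ℂ))) z := diffAt_wirtZbar dfHc
  have dG2 : DifferentiableAt ℝ (fun ζ => ((u ζ : ℂ) - w ζ) / 2) z :=
    diffAt_div_const (duc.sub dw)
  have dE2 : DifferentiableAt ℝ (fun ζ => w ζ / 2) z := diffAt_div_const dw
  have dF2 : DifferentiableAt ℝ (fun ζ => -w ζ / 2) z := diffAt_div_const dw.neg
  have dG : DifferentiableAt ℝ (fun ζ => Complex.exp (((u ζ : ℂ) - w ζ) / 2)) z :=
    diffAt_cexp dG2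
  have dE : DifferentiableAt ℝ (fun ζ => Complex.exp (w ζ / 2)) z :=
    diffAt_cexp dE2
  have dF : DifferentiableAt ℝ (fun ζ => Complex.exp (-w ζ / 2)) z :=
    diffAt_cexp dF2
  have hcomm : wirtZ (wirtZbar w) z = wirtZbar (wirtZ w) z :=
    wirtZ_wirtZbar_comm (cwT.of_le (by exact WithTop.coe_le_coe.2 le_top))
  have hl : lam * lam⁻¹ = 1 := mul_inv_cancel₀ hlam
  have hEE : Complex.exp (w z / 2) * Complex.exp (w z / 2) = Complex.exp (w z) := by
    rw [← Complex.exp_add, add_halves]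
  have hFF : Complex.exp (-w z / 2) * Complex.exp (-w z / 2) = Complex.exp (-(w z)) := by
    rw [← Complex.exp_add, add_halves]
  -- scalar derivative computations
  have hA00 : wirtZbar (fun ζ => wirtZ w ζ / 4 + 1 / 2 * wirtZ (fun ζ => (H ζ : ℂ)) ζ
        * Complex.exp (((u ζ : ℂ) - w ζ) / 2)) z
      = wirtZbar (wirtZ w) z / 4
        + (1 / 2 * wirtZbar (wirtZ (fun ζ => (H ζ : ℂ))) z) * Complex.exp (((u z : ℂ) - w z) / 2)
        + (1 / 2 * wirtZ (fun ζ => (H ζ : ℂ)) z) * (Complex.exp (((u z : ℂ) - w z) / 2)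
            * ((wirtZbar (fun ζ => (u ζ : ℂ)) z - wirtZbar w z) / 2)) := by
    rw [wirtZbar_add (diffAt_div_const dwz) ((dhz.const_mul _).fun_mul dG),
      wirtZbar_div_const dwz,
      wirtZbar_mul (dhz.const_mul _) dG,
      wirtZbar_const_mul dhz,
      wirtZbar_exp dG2,
      wirtZbar_div_const (duc.fun_sub dw),
      wirtZbar_sub duc dw]
    ring
  have hC00 : wirtZ (fun ζ => -wirtZbar w ζ / 4) z = -wirtZ (wirtZbar w) z / 4 := by
    rw [wirtZ_div_const dwzb.fun_neg, wirtZ_neg dwzb]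
  have hA01 : wirtZbar (fun ζ => -lam⁻¹ * Complex.exp (w ζ / 2)) z
      = -lam⁻¹ * (Complex.exp (w z / 2) * (wirtZbar w z / 2)) := by
    rw [wirtZbar_const_mul dE, wirtZbar_exp dE2, wirtZbar_div_const dw]
  have hC01 : wirtZ (fun ζ => -lam * (starRingEnd ℂ) (B ζ) * Complex.exp (-w ζ / 2)) z
      = (-lam * starRingEnd ℂ (wirtZbar B z)) * Complex.exp (-w z / 2)
        + (-lam * starRingEnd ℂ (B z)) * (Complex.exp (-w z / 2) * (-wirtZ w z / 2)) := by
    rw [wirtZ_mul ((diffAt_conj dB).const_mul _) dF,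
      wirtZ_const_mul (diffAt_conj dB),
      wirtZ_conj,
      wirtZ_exp dF2,
      wirtZ_div_const dw.fun_neg,
      wirtZ_neg dw]
  have hA10 : wirtZbar (fun ζ => lam⁻¹ * B ζ * Complex.exp (-w ζ / 2)) z
      = (lam⁻¹ * wirtZbar B z) * Complex.exp (-w z / 2)
        + (lam⁻¹ * B z) * (Complex.exp (-w z / 2) * (-wirtZbar w z / 2)) := by
    rw [wirtZbar_mul (dB.const_mul _) dF,
      wirtZbar_const_mul dB,
      wirtZbar_exp dF2,
      wirtZbar_div_const dw.fun_neg,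
      wirtZbar_neg dw]
  have hC10 : wirtZ (fun ζ => lam * Complex.exp (w ζ / 2)) z
      = lam * (Complex.exp (w z / 2) * (wirtZ w z / 2)) := by
    rw [wirtZ_const_mul dE, wirtZ_exp dE2, wirtZ_div_const dw]
  have hA11 : wirtZbar (fun ζ => -wirtZ w ζ / 4) z = -wirtZbar (wirtZ w) z / 4 := by
    rw [wirtZbar_div_const dwz.fun_neg, wirtZbar_neg dwz]
  have hC11 : wirtZ (fun ζ => wirtZbar w ζ / 4 + 1 / 2 * wirtZbar (fun ζ => (H ζ : ℂ)) ζ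
        * Complex.exp (((u ζ : ℂ) - w ζ) / 2)) z
      = wirtZ (wirtZbar w) z / 4
        + (1 / 2 * wirtZ (wirtZbar (fun ζ => (H ζ : ℂ))) z) * Complex.exp (((u z : ℂ) - w z) / 2)
        + (1 / 2 * wirtZbar (fun ζ => (H ζ : ℂ)) z) * (Complex.exp (((u z : ℂ) - w z) / 2)
            * ((wirtZ (fun ζ => (u ζ : ℂ)) z - wirtZ w z) / 2)) := by
    rw [wirtZ_add (diffAt_div_const dwzb) ((dhzb.const_mul _).fun_mul dG),
      wirtZ_div_const dwzb,
      wirtZ_mul (dhzb.const_mul _) dG,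
      wirtZ_const_mul dhzb,
      wirtZ_exp dG2,
      wirtZ_div_const (duc.fun_sub dw),
      wirtZ_sub duc dw]
    ring
  ext i j
  fin_cases i <;> fin_cases j <;>
    simp only [mwirtZbar, mwirtZ, Umat, Vmat, Matrix.sub_apply, Matrix.add_apply,
      Matrix.mul_apply, Fin.sum_univ_two, Matrix.of_apply, Matrix.cons_val', Matrix.cons_val_zero,
      Matrix.cons_val_one, Matrix.head_cons, Matrix.head_fin_const, Matrix.empty_val',
      Matrix.cons_val_fin_one, Fin.mk_zero, Fin.mk_one]
  · rw [hA00, hC00]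
    linear_combination (1/4 : ℂ) * hcomm
      + (Complex.exp (w z/2) * Complex.exp (w z/2)
          - B z * starRingEnd ℂ (B z) * (Complex.exp (-w z/2) * Complex.exp (-w z/2))) * hl
      + hEE - B z * starRingEnd ℂ (B z) * hFF
  · rw [hA01, hC01]
    ring
  · rw [hA10, hC10]
    ring
  · rw [hA11, hC11]
    linear_combination (-1/4 : ℂ) * hcomm
      - (Complex.exp (w z/2) * Complex.exp (w z/2)
          - B z * starRingEnd ℂ (B z) * (Complex.exp (-w z/2) * Complex.exp (-w z/2))) * hl
      - hEE + B z * starRingEnd ℂ (B z) * hFF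

end Key

section Aux

lemma wirtZbar_ofReal (H : ℂ → ℝ) (z : ℂ) :
    wirtZbar (fun ζ => (H ζ : ℂ)) z = starRingEnd ℂ (wirtZ (fun ζ => (H ζ : ℂ)) z) := by
  have h : (fun ζ => ((H ζ : ℂ))) = (fun ζ => starRingEnd ℂ ((H ζ : ℂ))) := by
    funext ζ; rw [Complex.conj_ofReal]
  conv_lhs => rw [h]
  exact wirtZbar_conj _ _

lemma const_of_fderiv_zero {𝔻 : Set ℂ} (hopen : IsOpen 𝔻) (hconn : IsConnected 𝔻)
    {f : ℂ → ℂ} (hdiff : ∀ ζ ∈ 𝔻, DifferentiableAt ℝ f ζ)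
    (h0 : ∀ ζ ∈ 𝔻, fderiv ℝ f ζ = 0) :
    ∀ x ∈ 𝔻, ∀ y ∈ 𝔻, f x = f y := by
  have hloc : ∀ x ∈ 𝔻, ∀ᶠ y in nhds x, f y = f x := by
    intro x hx
    obtain ⟨ε, hε, hball⟩ := Metric.isOpen_iff.1 hopen x hx
    have hconv : Convex ℝ (Metric.ball x ε) := convex_ball x ε
    have hdo : DifferentiableOn ℝ f (Metric.ball x ε) :=
      fun y hy => (hdiff y (hball hy)).differentiableWithinAt
    have hfd : ∀ y ∈ Metric.ball x ε, fderivWithin ℝ f (Metric.ball x ε) y = 0 := by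
      intro y hy
      rw [fderivWithin_of_isOpen Metric.isOpen_ball hy]
      exact h0 y (hball hy)
    filter_upwards [Metric.ball_mem_nhds x hε] with y hy
    exact hconv.is_const_of_fderivWithin_eq_zero hdo hfd hy (Metric.mem_ball_self hε)
  intro x hx y hy
  haveI : PreconnectedSpace 𝔻 := Subtype.preconnectedSpace hconn.isPreconnected
  have hlc : IsLocallyConstant (fun p : 𝔻 => f p) := by
    rw [IsLocallyConstant.iff_eventually_eq]
    intro p
    exact Filter.Tendsto.eventually continuous_subtype_val.continuousAt (hloc p p.2)
  exact hlc.apply_eq_of_preconnectedSpace ⟨x, hx⟩ ⟨y, hy⟩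

lemma wirtZ_zero_of_constH {𝔻 : Set ℂ} (hopen : IsOpen 𝔻) {H : ℂ → ℝ}
    (hc : ∀ x ∈ 𝔻, ∀ y ∈ 𝔻, H x = H y) {z : ℂ} (hz : z ∈ 𝔻) :
    wirtZ (fun ζ => (H ζ : ℂ)) z = 0 := by
  have hev : (fun ζ => ((H ζ : ℂ))) =ᶠ[nhds z] (fun _ => ((H z : ℂ))) := by
    filter_upwards [hopen.mem_nhds hz] with ζ hζ
    exact_mod_cast congrArg Complex.ofReal (hc ζ hζ z hz)
  rw [wirtZ_congr hev, wirtZ_const]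

end Aux

theorem zero_curvature_iff_cmc (𝔻 : Set ℂ) (hopen : IsOpen 𝔻) (hne : 𝔻.Nonempty)
    (hconn : IsConnected 𝔻)
    (w B : ℂ → ℂ) (H u : ℂ → ℝ)
    (hw : ContDiffOn ℝ (⊤ : ℕ∞) w 𝔻) (hB : ContDiffOn ℝ (⊤ : ℕ∞) B 𝔻)
    (hH : ContDiffOn ℝ (⊤ : ℕ∞) H 𝔻) (hu : ContDiffOn ℝ (⊤ : ℕ∞) u 𝔻) :
    (∀ lam : ℂ, lam ≠ 0 → ∀ z ∈ 𝔻,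
        mwirtZbar (Umat w B H u lam) z - mwirtZ (Vmat w B H u lam) z
          + Vmat w B H u lam z * Umat w B H u lam z
          - Umat w B H u lam z * Vmat w B H u lam z = 0) ↔
      ((∀ z ∈ 𝔻, ∀ z' ∈ 𝔻, H z = H z') ∧
       (∀ z ∈ 𝔻, wirtZbar B z = 0) ∧
       (∀ z ∈ 𝔻, (1 / 2) * wirtZbar (fun ζ => wirtZ w ζ) z + Complex.exp (w z)
          - B z * starRingEnd ℂ (B z) * Complex.exp (-(w z)) = 0)) := by

  constructor
  · intro h
    have main : ∀ z ∈ 𝔻, wirtZ (fun ζ => (H ζ : ℂ)) z = 0 ∧ wirtZbar B z = 0 := by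
      intro z hz
      have h1 := h 1 one_ne_zero z hz
      have h2 := h 2 two_ne_zero z hz
      rw [hM_key 𝔻 hopen w B H u hw hB hH hu one_ne_zero hz] at h1
      rw [hM_key 𝔻 hopen w B H u hw hB hH hu two_ne_zero hz] at h2
      have e1 := Matrix.ext_iff.2 h1 1 0
      have e2 := Matrix.ext_iff.2 h2 1 0
      simp only [Matrix.cons_val', Matrix.cons_val_zero, Matrix.cons_val_one, Matrix.head_cons,
        Matrix.head_fin_const, Matrix.empty_val', Matrix.cons_val_fin_one, Matrix.of_apply,
        Matrix.zero_apply] at e1 e2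
      have hQ : Complex.exp (w z / 2) * ((1/2) * wirtZ (fun ζ => (H ζ : ℂ)) z
          * Complex.exp (((u z : ℂ) - w z) / 2)) = 0 := by
        linear_combination (-1/3 : ℂ) * e1 + (2/3 : ℂ) * e2
      have hP : Complex.exp (-(w z) / 2) * (wirtZbar B z
          + B z * ((1/2) * wirtZbar (fun ζ => (H ζ : ℂ)) z
            * Complex.exp (((u z : ℂ) - w z) / 2))) = 0 := by
        linear_combination (4/3 : ℂ) * e1 + (-2/3 : ℂ) * e2
      have hQ' := (mul_eq_zero.mp hQ).resolve_left (Complex.exp_ne_zero _)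
      have hQ'' := (mul_eq_zero.mp hQ').resolve_right (Complex.exp_ne_zero _)
      have hz0 : wirtZ (fun ζ => (H ζ : ℂ)) z = 0 := by linear_combination 2 * hQ''
      have hzb0 : wirtZbar (fun ζ => (H ζ : ℂ)) z = 0 := by
        rw [wirtZbar_ofReal, hz0, map_zero]
      have hP' := (mul_eq_zero.mp hP).resolve_left (Complex.exp_ne_zero _)
      rw [hzb0] at hP'
      have hbz : wirtZbar B z = 0 := by linear_combination hP'
      exact ⟨hz0, hbz⟩
    have hgauss : ∀ z ∈ 𝔻, (1 / 2) * wirtZbar (fun ζ => wirtZ w ζ) z + Complex.exp (w z)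
        - B z * starRingEnd ℂ (B z) * Complex.exp (-(w z)) = 0 := by
      intro z hz
      have h1 := h 1 one_ne_zero z hz
      rw [hM_key 𝔻 hopen w B H u hw hB hH hu one_ne_zero hz] at h1
      have e0 := Matrix.ext_iff.2 h1 0 0
      simp only [Matrix.cons_val', Matrix.cons_val_zero, Matrix.cons_val_one, Matrix.head_cons,
        Matrix.head_fin_const, Matrix.empty_val', Matrix.cons_val_fin_one, Matrix.of_apply,
        Matrix.zero_apply] at e0
      have hH2 : wirtZbar (wirtZ (fun ζ => (H ζ : ℂ))) z = 0 := by
        have hev : (wirtZ (fun ζ => (H ζ : ℂ))) =ᶠ[nhds z] (fun _ => (0 : ℂ)) := by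
          filter_upwards [hopen.mem_nhds hz] with ζ hζ
          exact (main ζ hζ).1
        rw [wirtZbar_congr hev, wirtZbar_const]
      rw [hH2, (main z hz).1] at e0
      linear_combination e0
    have hHconst : ∀ z ∈ 𝔻, ∀ z' ∈ 𝔻, H z = H z' := by
      have hdiff : ∀ ζ ∈ 𝔻, DifferentiableAt ℝ (fun ξ => (H ξ : ℂ)) ζ := by
        intro ζ hζ
        exact ((Complex.ofRealCLM.contDiff.comp_contDiffOn hH).contDiffAt
          (hopen.mem_nhds hζ)).differentiableAt (by simp)
      have hfz : ∀ ζ ∈ 𝔻, fderiv ℝ (fun ξ => (H ξ : ℂ)) ζ = 0 := by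
        intro ζ hζ
        exact fderiv_eq_zero_of_wirt ((main ζ hζ).1)
          (by rw [wirtZbar_ofReal, (main ζ hζ).1, map_zero])
      intro z hz z' hz'
      have := const_of_fderiv_zero hopen hconn hdiff hfz z hz z' hz'
      exact_mod_cast this
    exact ⟨hHconst, fun z hz => (main z hz).2, hgauss⟩
  · rintro ⟨hHc, hB0, hG⟩ lam hlam z hz
    rw [hM_key 𝔻 hopen w B H u hw hB hH hu hlam hz]
    have hz0 : wirtZ (fun ζ => (H ζ : ℂ)) z = 0 := wirtZ_zero_of_constH hopen hHc hz
    have hzb0 : wirtZbar (fun ζ => (H ζ : ℂ)) z = 0 := by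
      rw [wirtZbar_ofReal, hz0, map_zero]
    have h2a : wirtZbar (wirtZ (fun ζ => (H ζ : ℂ))) z = 0 := by
      have hev : (wirtZ (fun ζ => (H ζ : ℂ))) =ᶠ[nhds z] (fun _ => (0 : ℂ)) := by
        filter_upwards [hopen.mem_nhds hz] with ζ hζ
        exact wirtZ_zero_of_constH hopen hHc hζ
      rw [wirtZbar_congr hev, wirtZbar_const]
    have h2b : wirtZ (wirtZbar (fun ζ => (H ζ : ℂ))) z = 0 := by
      have hev : (wirtZbar (fun ζ => (H ζ : ℂ))) =ᶠ[nhds z] (fun _ => (0 : ℂ)) := by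
        filter_upwards [hopen.mem_nhds hz] with ζ hζ
        rw [wirtZbar_ofReal, wirtZ_zero_of_constH hopen hHc hζ, map_zero]
      rw [wirtZ_congr hev, wirtZ_const]
    have hbz : wirtZbar B z = 0 := hB0 z hz
    have hg := hG z hz
    ext i j
    fin_cases i <;> fin_cases j <;>
      simp only [Matrix.cons_val', Matrix.cons_val_zero, Matrix.cons_val_one, Matrix.head_cons,
        Matrix.head_fin_const, Matrix.empty_val', Matrix.cons_val_fin_one, Matrix.of_apply,
        Matrix.zero_apply, Fin.mk_zero, Fin.mk_one]
    · rw [h2a, hz0]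
      linear_combination hg
    · rw [hzb0, hz0, hbz]
      simp
    · rw [hzb0, hz0, hbz]
      simp
    · rw [h2b, hzb0]
      linear_combination -hg
end

section
/- Let w, p, q, B ∈ ℂ and λ ∈ ℂ with |λ| = 1. Define the 2×2 complex matrices U = [[p/4, −λ⁻¹ e^{w/2}], [λ⁻¹ B e^{−w/2}, −p/4]] and V = [[−q/4, −λ (conj B) e^{−w/2}], [λ e^{w/2}, q/4]]. Then V = −σ₃ U† σ₃ holds if and only if q = conj p and Re(e^{w/2}) = 0 (i.e., e^{w/2} is purely imaginary). -/
/-!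
Conjugation by `σ₃` flips the signs of the off-diagonal entries, so `-σ₃ U† σ₃` has diagonal
`(-p̄/4, p̄/4)` and off-diagonal entries the conjugates of `U₁₀`, `U₀₁`. As `λ̄ = λ⁻¹` on the unit
circle, the diagonal entries give `q = p̄` and the `(1,0)` entry gives `conj e^{w/2} = -e^{w/2}`.
The `(0,1)` entry is then automatic: the inverse `e^{-w/2}` of a purely imaginary number is
purely imaginary.
-/

/-- The Pauli matrix `σ₃ = diag(1, -1)`. -/
noncomputable def sigma3 : Matrix (Fin 2) (Fin 2) ℂ := !![1, 0; 0, -1]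

open ComplexConjugate Matrix

theorem Matrix.of_fin_two_eq_iff {α : Type*} {a b c d a' b' c' d' : α} :
    !![a, b; c, d] = !![a', b'; c', d'] ↔ a = a' ∧ b = b' ∧ c = c' ∧ d = d' := by
  simp [and_assoc]

theorem neg_sigma3_mul_conjTranspose_mul_sigma3 (a b c d : ℂ) :
    -(sigma3 * !![a, b; c, d]ᴴ * sigma3) = !![-conj a, conj c; conj b, -conj d] := by
  rw [sigma3, eta_fin_two !![a, b; c, d]ᴴ]
  simp

theorem Complex.re_eq_zero_iff_conj_eq_neg {z : ℂ} : z.re = 0 ↔ conj z = -z := by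
  simp [Complex.ext_iff, eq_neg_iff_add_eq_zero]

theorem su11_reality_iff_minimal (w p q B lam : ℂ) (hlam : ‖lam‖ = 1) :
    let U : Matrix (Fin 2) (Fin 2) ℂ :=
      !![p / 4, -lam⁻¹ * Complex.exp (w / 2);
         lam⁻¹ * B * Complex.exp (-w / 2), -p / 4]
    let V : Matrix (Fin 2) (Fin 2) ℂ :=
      !![-q / 4, -lam * starRingEnd ℂ B * Complex.exp (-w / 2);
         lam * Complex.exp (w / 2), q / 4]
    (V = -(sigma3 * U.conjTranspose * sigma3) ↔
      (q = starRingEnd ℂ p ∧ (Complex.exp (w / 2)).re = 0)) := by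
  intro U V
  have hlam_conj : conj lam⁻¹ = lam := by rw [Complex.inv_eq_conj hlam, Complex.conj_conj]
  have hlam0 : lam ≠ 0 := by rintro rfl; simp at hlam
  simp only [U, V, neg_sigma3_mul_conjTranspose_mul_sigma3, of_fin_two_eq_iff, neg_div,
    Complex.exp_neg, map_mul, map_neg, map_div₀, map_inv₀, map_ofNat, hlam_conj,
    Complex.re_eq_zero_iff_conj_eq_neg]
  constructor
  · rintro ⟨hp, -, hexp, -⟩
    refine ⟨by linear_combination -4 * hp, mul_left_cancel₀ hlam0 ?_⟩
    linear_combination hexp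
  · rintro ⟨rfl, hexp⟩
    refine ⟨rfl, ?_, ?_, (neg_neg _).symm⟩ <;> rw [hexp] <;> ring
end

section
/- Let σ₃ = diag(1, −1) ∈ M₂(ℂ). Let X ∈ M₂(ℂ) satisfy: trace X = 0; X† σ₃ + σ₃ X = 0; 2 · trace(X · X) = −1; and the real number Re(2 · trace(i • (X * σ₃))) is negative. Then there exists g ∈ M₂(ℂ) with det g = 1 and g† σ₃ g = σ₃ such that g · ((i/2) • σ₃) · g⁻¹ = X. -/
/-!
An element of `su(1,1)` is `!![t i, b; b̄, -t i]` with `t` real; the hyperboloid condition reads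
`t² - |b|² = 1/4` and the sheet condition `t > 0`. Conjugating `(i/2) σ₃` by
`!![u, v; v̄, ū]` with `|u|² - |v|² = 1` gives the point with `t = (|u|² + |v|²)/2` and `b = -i u v`,
so `u = √(t + 1/2)`, `v = i b / u` reaches any point of the upper sheet.
-/

open Complex ComplexConjugate Matrix

def su11Lie (t : ℝ) (b : ℂ) : Matrix (Fin 2) (Fin 2) ℂ := !![t * I, b; conj b, -(t * I)]

def su11Mat (u v : ℂ) : Matrix (Fin 2) (Fin 2) ℂ := !![u, v; conj v, conj u]

theorem eq_su11Lie_of_trace_eq_zero {X : Matrix (Fin 2) (Fin 2) ℂ} (htr : X.trace = 0)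
    (hsu : Xᴴ * sigma3 + sigma3 * X = 0) : X = su11Lie (X 0 0).im (X 0 1) := by
  have h00 := congrFun₂ hsu 0 0
  have h10 := congrFun₂ hsu 1 0
  simp only [Matrix.add_apply, mul_apply, Fin.sum_univ_two, sigma3] at h00 h10
  simp at h00 h10
  have ha : X 0 0 = (X 0 0).im * I :=
    Complex.ext (by simpa [← two_mul] using congrArg re h00) (by simp)
  rw [trace_fin_two] at htr
  ext i j; fin_cases i <;> fin_cases j <;> simp [su11Lie]
  · exact ha
  · linear_combination -h10
  · linear_combination htr - ha

theorem two_mul_trace_su11Lie_mul_self (t : ℝ) (b : ℂ) :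
    2 * (su11Lie t b * su11Lie t b).trace = ((4 * (normSq b - t ^ 2) : ℝ) : ℂ) := by
  simp only [su11Lie, trace_fin_two, mul_fin_two, of_apply, cons_val', cons_val_zero, cons_val_one,
    empty_val', cons_val_fin_one]
  push_cast
  rw [← mul_conj]
  linear_combination (4 * (t : ℂ) ^ 2) * I_sq

theorem re_two_mul_trace_I_smul_su11Lie_mul_sigma3 (t : ℝ) (b : ℂ) :
    ((2 : ℂ) * (I • (su11Lie t b * sigma3)).trace).re = -4 * t := by
  simp [su11Lie, sigma3, trace_fin_two]
  ring

theorem det_su11Mat (u v : ℂ) : (su11Mat u v).det = ((normSq u - normSq v : ℝ) : ℂ) := by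
  simp [su11Mat, det_fin_two, mul_conj]

theorem conjTranspose_su11Mat_mul_sigma3_mul (u v : ℂ) :
    (su11Mat u v)ᴴ * sigma3 * su11Mat u v = ((normSq u - normSq v : ℝ) : ℂ) • sigma3 := by
  ext i j; fin_cases i <;> fin_cases j <;>
    simp [su11Mat, sigma3, mul_apply, Fin.sum_univ_two, ← mul_conj] <;> ring

theorem su11Mat_mul_smul_sigma3_mul_adjugate (u v : ℂ) :
    su11Mat u v * ((I / 2) • sigma3) * (su11Mat u v).adjugate =
      su11Lie ((normSq u + normSq v) / 2) (-I * u * v) := by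
  ext i j; fin_cases i <;> fin_cases j <;>
    simp [su11Mat, su11Lie, sigma3, adjugate_fin_two, mul_apply, Fin.sum_univ_two, ← mul_conj] <;>
    ring

theorem exists_normSq_sub_eq_one_of_normSq_eq {t : ℝ} {b : ℂ} (ht : -1 / 2 < t)
    (hb : normSq b = t ^ 2 - 1 / 4) :
    ∃ u v : ℂ, normSq u - normSq v = 1 ∧ (normSq u + normSq v) / 2 = t ∧ -I * u * v = b := by
  have hpos : 0 < t + 1 / 2 := by linarith
  set r := √(t + 1 / 2)
  have hr : r ^ 2 = t + 1 / 2 := Real.sq_sqrt hpos.le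
  have hr0 : (r : ℂ) ≠ 0 := ofReal_ne_zero.mpr (Real.sqrt_pos.mpr hpos).ne'
  have hv : normSq (I * b / r) = t - 1 / 2 := by
    rw [normSq_div, normSq_mul, normSq_I, normSq_ofReal, ← sq, hr, hb, one_mul, div_eq_iff hpos.ne']
    ring
  refine ⟨r, I * b / r, ?_, ?_, ?_⟩
  · rw [hv, normSq_ofReal, ← sq, hr]; ring
  · rw [hv, normSq_ofReal, ← sq, hr]; ring
  · field_simp
    linear_combination (-b) * I_sq

theorem su11_acts_transitively_on_hyperbolic_plane (X : Matrix (Fin 2) (Fin 2) ℂ)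
    (htr : X.trace = 0)
    (hsu : X.conjTranspose * sigma3 + sigma3 * X = 0)
    (hnorm : 2 * (X * X).trace = -1)
    (hsheet : ((2 : ℂ) * (Complex.I • (X * sigma3)).trace).re < 0) :
    ∃ g : Matrix (Fin 2) (Fin 2) ℂ, g.det = 1 ∧
      g.conjTranspose * sigma3 * g = sigma3 ∧
      g * ((Complex.I / 2) • sigma3) * g⁻¹ = X := by
  have hX := eq_su11Lie_of_trace_eq_zero htr hsu
  rw [hX, two_mul_trace_su11Lie_mul_self] at hnorm
  rw [hX, re_two_mul_trace_I_smul_su11Lie_mul_sigma3] at hsheet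
  have hb : normSq (X 0 1) = (X 0 0).im ^ 2 - 1 / 4 := by
    have : 4 * (normSq (X 0 1) - (X 0 0).im ^ 2) = -1 := by exact_mod_cast hnorm
    linarith
  obtain ⟨u, v, hdet, hsum, huv⟩ := exists_normSq_sub_eq_one_of_normSq_eq (by linarith) hb
  have hdet' : (su11Mat u v).det = 1 := by rw [det_su11Mat, hdet, ofReal_one]
  refine ⟨su11Mat u v, hdet', ?_, ?_⟩
  · rw [conjTranspose_su11Mat_mul_sigma3_mul, hdet, ofReal_one, one_smul]
  · rw [Matrix.inv_def, hdet', Ring.inverse_one, one_smul, su11Mat_mul_smul_sigma3_mul_adjugate,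
      hsum, huv, ← hX]
end
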